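/- arXiv:2002.06940 — 5 statements merged into one kernel-verified Lean document; each statement's English description precedes it below -/
import Mathlib

section
/- For a prime number p, the augmentation ideal of ℚ[C_p], i.e. the kernel of the ℚ-algebra homomorphism ℚ[C_p] → ℚ sending every group element to 1, is a simple ℚ[C_p]-module whose dimension as a ℚ-vector space equals p − 1, and the C_p-action on it is nontrivial (some element of C_p acts non-identically). -/
/-- For a prime `p`, the augmentation ideal of `ℚ[C_p]` (the kernel of the `ℚ`-algebra
homomorphism `ℚ[C_p] → ℚ` sending every group element to `1`) is a simple
`ℚ[C_p]`-module, its dimension as a `ℚ`-vector space is `p - 1`, and the `C_p`-action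
on it is nontrivial. -/
theorem augmentationIdeal_simple_dim_nontrivial (p : ℕ) (hp : p.Prime) :
    IsSimpleModule (MonoidAlgebra ℚ (Multiplicative (ZMod p)))
      (RingHom.ker (MonoidAlgebra.lift ℚ ℚ (Multiplicative (ZMod p))
        (1 : Multiplicative (ZMod p) →* ℚ))) ∧
    Module.finrank ℚ
      (RingHom.ker (MonoidAlgebra.lift ℚ ℚ (Multiplicative (ZMod p))
        (1 : Multiplicative (ZMod p) →* ℚ))) = p - 1 ∧
    ∃ (g : Multiplicative (ZMod p))
      (x : RingHom.ker (MonoidAlgebra.lift ℚ ℚ (Multiplicative (ZMod p))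
        (1 : Multiplicative (ZMod p) →* ℚ))),
      MonoidAlgebra.of ℚ (Multiplicative (ZMod p)) g • x ≠ x := by
  haveI : Fact p.Prime := ⟨hp⟩
  have hp1 : 1 < p := hp.one_lt
  set G := Multiplicative (ZMod p) with hG
  set A := MonoidAlgebra ℚ G with hA
  set ε : A →ₐ[ℚ] ℚ := MonoidAlgebra.lift ℚ ℚ G 1 with hε
  set I : Ideal A := RingHom.ker ε with hI
  set n : ℕ+ := ⟨p, hp.pos⟩ with hn
  let K := CyclotomicField n ℚ
  haveI : NeZero ((n : ℕ) : ℚ) := ⟨by exact_mod_cast n.ne_zero⟩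
  haveI : IsCyclotomicExtension {(n : ℕ)} ℚ K := CyclotomicField.isCyclotomicExtension n ℚ
  let ζ : K := IsCyclotomicExtension.zeta n ℚ K
  have hζ : IsPrimitiveRoot ζ n := IsCyclotomicExtension.zeta_spec n ℚ K
  have hζp : ζ ^ p = 1 := hζ.pow_eq_one
  have hζ1 : ζ ≠ 1 := hζ.ne_one hp1
  have hζ1' : ζ - 1 ≠ 0 := sub_ne_zero.2 hζ1
  have hKdim : Module.finrank ℚ K = p - 1 := by
    rw [IsCyclotomicExtension.finrank K (Polynomial.cyclotomic.irreducible_rat n.pos)]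
    exact Nat.totient_prime hp
  -- the algebra map φ : ℚ[C_p] → K sending the generator to ζ
  have hpow : ∀ m : ℕ, ζ ^ (m % p) = ζ ^ m := fun m => by
    conv_rhs => rw [← Nat.mod_add_div m p, pow_add, pow_mul, hζp, one_pow, mul_one]
  let f : G →* K :=
  { toFun := fun g => ζ ^ (Multiplicative.toAdd g).val,
    map_one' := by simp,
    map_mul' := fun a b => by
      show ζ ^ (Multiplicative.toAdd a + Multiplicative.toAdd b).val = _
      rw [ZMod.val_add, hpow, pow_add] }
  let φ : A →ₐ[ℚ] K := MonoidAlgebra.lift ℚ K G f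
  have hφg : φ (MonoidAlgebra.of ℚ G (Multiplicative.ofAdd 1)) = ζ := by
    rw [MonoidAlgebra.lift_of]
    show ζ ^ (1 : ZMod p).val = ζ
    rw [ZMod.val_one p, pow_one]
  have hφsurj : Function.Surjective φ := by
    rw [← AlgHom.range_eq_top]
    refine top_unique ?_
    rw [← IsCyclotomicExtension.adjoin_primitive_root_eq_top hζ]
    exact Algebra.adjoin_le (Set.singleton_subset_iff.2 ⟨_, hφg⟩)
  -- the element g - 1 of the augmentation ideal
  set x₀ : A := MonoidAlgebra.of ℚ G (Multiplicative.ofAdd 1) - 1 with hx₀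
  have hx₀I : x₀ ∈ I := by
    have : ε (MonoidAlgebra.of ℚ G (Multiplicative.ofAdd 1)) = 1 := by
      rw [hε, MonoidAlgebra.lift_of]; rfl
    rw [hI, RingHom.mem_ker, hx₀, map_sub, this, map_one, sub_self]
  have hφx₀ : φ x₀ = ζ - 1 := by
    rw [hx₀, map_sub, hφg, map_one]
  -- dimension of A
  have hAdim : Module.finrank ℚ A = p := by
    have : Module.finrank ℚ (G →₀ ℚ) = Fintype.card G := Module.finrank_finsupp_self ℚ
    rw [(MonoidAlgebra.coeffLinearEquiv ℚ).finrank_eq]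
    rw [this]
    rw [show Fintype.card G = Fintype.card (ZMod p) from Fintype.card_multiplicative _]
    exact ZMod.card p
  haveI : FiniteDimensional ℚ A := by
    have : FiniteDimensional ℚ (G →₀ ℚ) := inferInstance
    exact LinearEquiv.finiteDimensional (MonoidAlgebra.coeffLinearEquiv ℚ).symm
  -- ε is surjective
  have hεsurj : Function.Surjective ε.toLinearMap := fun q =>
    ⟨algebraMap ℚ A q, by simp⟩
  -- dimension of the augmentation ideal
  have hkerI : LinearMap.ker ε.toLinearMap = I.restrictScalars ℚ := by
    ext x
    exact Iff.rfl
  have hIdim : Module.finrank ℚ I = p - 1 := by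
    have h := LinearMap.finrank_range_add_finrank_ker ε.toLinearMap
    rw [LinearMap.range_eq_top.2 hεsurj, finrank_top, Module.finrank_self, hAdim, hkerI] at h
    have : Module.finrank ℚ (I.restrictScalars ℚ) = Module.finrank ℚ I := rfl
    omega
  -- φ restricted to I, as a ℚ-linear map
  let ψ : (I.restrictScalars ℚ) →ₗ[ℚ] K := φ.toLinearMap.comp (I.restrictScalars ℚ).subtype
  have hψsurj : Function.Surjective ψ := by
    intro k
    have hmap : Ideal.map (φ : A →+* K) I = ⊤ := by
      rcases (Ideal.map (φ : A →+* K) I).eq_bot_or_top with h | h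
      · exfalso
        have : φ x₀ ∈ Ideal.map (φ : A →+* K) I := Ideal.mem_map_of_mem _ hx₀I
        rw [h] at this
        rw [Ideal.mem_bot] at this
        exact hζ1' (hφx₀ ▸ this)
      · exact h
    have : k ∈ Ideal.map (φ : A →+* K) I := hmap ▸ Submodule.mem_top
    obtain ⟨x, hxI, hx⟩ := (Ideal.mem_map_iff_of_surjective (φ : A →+* K) hφsurj).1 this
    exact ⟨⟨x, hxI⟩, hx⟩
  haveI : FiniteDimensional ℚ (I.restrictScalars ℚ) := inferInstance
  haveI : FiniteDimensional ℚ K := FiniteDimensional.of_finrank_pos (by rw [hKdim]; omega)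
  have hfr : Module.finrank ℚ (I.restrictScalars ℚ) = Module.finrank ℚ K := by
    show Module.finrank ℚ I = Module.finrank ℚ K
    rw [hIdim, hKdim]
  have hψinj : Function.Injective ψ :=
    (LinearMap.injective_iff_surjective_of_finrank_eq_finrank hfr).2 hψsurj
  -- key injectivity statement
  have hinj : ∀ x ∈ I, φ x = 0 → x = 0 := by
    intro x hxI hx
    have : ψ ⟨x, hxI⟩ = ψ 0 := by simpa [ψ] using hx
    have := hψinj this
    simpa using congrArg Subtype.val this
  have hx₀ne : x₀ ≠ 0 := fun h => hζ1' (by rw [← hφx₀, h, map_zero])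
  -- simplicity
  haveI : Nontrivial I := ⟨⟨⟨x₀, hx₀I⟩, 0, fun h => hx₀ne (by simpa using congrArg Subtype.val h)⟩⟩
  have hsimple : IsSimpleModule A I := by
    rw [isSimpleModule_iff]
    constructor
    intro N
    rcases eq_or_ne N ⊥ with h | h
    · exact Or.inl h
    · refine Or.inr (eq_top_iff.2 ?_)
      obtain ⟨x, hxN, hxne⟩ := Submodule.exists_mem_ne_zero_of_ne_bot h
      intro y _
      have hφx : φ (x : A) ≠ 0 := by
        intro h0
        exact hxne (Subtype.ext (hinj _ x.2 h0))
      obtain ⟨a, ha⟩ := hφsurj (φ (y : A) / φ (x : A))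
      have hyx : (y : A) - a * (x : A) = 0 := by
        refine hinj _ ?_ ?_
        · exact Submodule.sub_mem _ y.2 (Ideal.mul_mem_left _ a x.2)
        · rw [map_sub, map_mul, ha, div_mul_cancel₀ _ hφx, sub_self]
      have : y = a • x := by
        apply Subtype.ext
        have : (y : A) = a * (x : A) := by linear_combination hyx
        simpa [Submodule.coe_smul] using this
      rw [this]
      exact N.smul_mem a hxN
  refine ⟨hsimple, hIdim, Multiplicative.ofAdd 1, ⟨x₀, hx₀I⟩, ?_⟩
  intro h
  have h' : MonoidAlgebra.of ℚ G (Multiplicative.ofAdd 1) * x₀ = x₀ :=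
    congrArg Subtype.val h
  have := congrArg φ h'
  rw [map_mul, hφg, hφx₀] at this
  exact hζ1 (mul_right_cancel₀ hζ1' (by rw [this, one_mul]))
end

section
/- For a prime number p, the group algebra ℤ_(p)[C_p], where ℤ_(p) is the localization of ℤ at the prime ideal (p), has no idempotent elements other than 0 and 1; equivalently, ℤ_(p)[C_p] is indecomposable as a module over itself. -/
/-!
Reduce modulo the maximal ideal `𝔪` of the local ring `R = ℤ_(p)`. Over a residue field of
characteristic `p`, Frobenius sends `u ∈ k[G]` to `single 1 (∑ u_g ^ p)` once every `g ^ p = 1`,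
so an idempotent `u = u ^ p` is a constant idempotent, `0` or `1`. An idempotent `e` of `R[G]` with
reduction `0` has coefficients in `𝔪`, so `e = e ^ n` has coefficients in `𝔪 ^ n` for all `n`, and
Krull's intersection theorem gives `e = 0`; reduction `1` is handled by passing to `1 - e`.
-/

theorem Int.span_singleton_prime_isPrime (p : ℕ) (hp : p.Prime) :
    (Ideal.span {(p : ℤ)}).IsPrime := by
  rw [Ideal.span_singleton_prime (by exact_mod_cast hp.ne_zero : (p : ℤ) ≠ 0)]
  exact Nat.prime_iff_prime_int.mp hp

/-- The localization of `ℤ` at the prime ideal `(p)`. -/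
abbrev IntLocAtPrime (p : ℕ) (hp : p.Prime) : Type :=
  @Localization.AtPrime ℤ _ (Ideal.span {(p : ℤ)}) (Int.span_singleton_prime_isPrime p hp)

namespace MonoidAlgebra

variable {R k G : Type*}

theorem pow_char_eq_single_one [CommSemiring k] [CommMonoid G] (p : ℕ) [Fact p.Prime]
    [CharP k p] (hG : ∀ g : G, g ^ p = 1) (u : k[G]) :
    u ^ p = single 1 (u.coeff.sum fun _ a => a ^ p) := by
  have : CharP k[G] p := charP_of_injective_ringHom (f := singleOneRingHom)
    single_right_injective p
  conv_lhs => rw [← u.sum_coeff_single]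
  simp only [Finsupp.sum, sum_pow_char, single_pow, hG]
  exact (map_sum (singleAddHom 1) _ _).symm

theorem eq_zero_or_one_of_isIdempotentElem_of_charP [CommRing k] [IsDomain k] [CommMonoid G]
    (p : ℕ) [hp : Fact p.Prime] [CharP k p] (hG : ∀ g : G, g ^ p = 1) {u : k[G]}
    (hu : IsIdempotentElem u) : u = 0 ∨ u = 1 := by
  obtain ⟨s, hus⟩ : ∃ s, u = single 1 s :=
    ⟨_, (hu.pow_eq hp.out.ne_zero).symm.trans (pow_char_eq_single_one p hG u)⟩
  have hs : IsIdempotentElem s := by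
    have := hu.eq
    rw [hus, single_mul_single, one_mul] at this
    exact single_right_injective this
  rcases IsIdempotentElem.iff_eq_zero_or_one.mp hs with rfl | rfl
  · exact .inl (hus.trans (single_zero 1))
  · exact .inr hus

theorem coeff_mul_mem_mul [CommSemiring R] [Monoid G] {I J : Ideal R} {x y : R[G]}
    (hx : ∀ g, x.coeff g ∈ I) (hy : ∀ g, y.coeff g ∈ J) (g : G) :
    (x * y).coeff g ∈ I * J := by
  classical
  rw [coeff_mul]
  refine Ideal.sum_mem _ fun a _ => Ideal.sum_mem _ fun b _ => ?_
  dsimp only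
  split_ifs
  · exact Ideal.mul_mem_mul (hx a) (hy b)
  · exact zero_mem _

theorem coeff_pow_mem_pow [CommSemiring R] [Monoid G] {I : Ideal R} {x : R[G]}
    (hx : ∀ g, x.coeff g ∈ I) (n : ℕ) (g : G) : (x ^ n).coeff g ∈ I ^ n := by
  induction n generalizing g with
  | zero => simp
  | succ n ih => rw [pow_succ, pow_succ]; exact coeff_mul_mem_mul ih hx g

theorem eq_zero_of_isIdempotentElem_of_coeff_mem [CommSemiring R] [Monoid G] {I : Ideal R}
    (hI : ⨅ n, I ^ n = ⊥) {e : R[G]} (he : IsIdempotentElem e) (hcoeff : ∀ g, e.coeff g ∈ I) :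
    e = 0 := by
  ext g
  have : e.coeff g ∈ ⨅ n, I ^ n := Ideal.mem_iInf.mpr fun n => by
    rw [← he.pow_succ_eq n]
    exact Ideal.pow_le_pow_right n.le_succ (coeff_pow_mem_pow hcoeff (n + 1) g)
  simpa [hI] using this

open IsLocalRing in
theorem eq_zero_or_one_of_isIdempotentElem_of_isLocalRing [CommRing R] [IsLocalRing R]
    [IsNoetherianRing R] [CommMonoid G] (p : ℕ) [Fact p.Prime] [CharP (ResidueField R) p]
    (hG : ∀ g : G, g ^ p = 1) {e : R[G]} (he : IsIdempotentElem e) : e = 0 ∨ e = 1 := by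
  have lift_zero {x : R[G]} (hx : IsIdempotentElem x) (h0 : mapRingHom G (residue R) x = 0) :
      x = 0 :=
    eq_zero_of_isIdempotentElem_of_coeff_mem
      (Ideal.iInf_pow_eq_bot_of_isLocalRing _ (maximalIdeal.isMaximal R).ne_top) hx fun g => by
        rw [← residue_eq_zero_iff, ← coeff_mapRingHom, h0]
        rfl
  rcases eq_zero_or_one_of_isIdempotentElem_of_charP p hG (he.map (mapRingHom G (residue R)))
    with h | h
  · exact .inl (lift_zero he h)
  · refine .inr (sub_eq_zero.mp ?_).symm
    exact lift_zero he.one_sub (by rw [map_sub, map_one, h, sub_self])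

end MonoidAlgebra

instance IntLocAtPrime.charP_residueField (p : ℕ) (hp : p.Prime) :
    CharP (IsLocalRing.ResidueField (IntLocAtPrime p hp)) p := by
  have := Int.span_singleton_prime_isPrime p hp
  rw [CharP.charP_iff_prime_eq_zero hp, ← map_natCast (IsLocalRing.residue _),
    IsLocalRing.residue_eq_zero_iff]
  simpa using (IsLocalization.AtPrime.to_map_mem_maximal_iff (IntLocAtPrime p hp) _ (p : ℤ)).mpr
    (Ideal.mem_span_singleton_self _)

/-- For a prime `p`, the group algebra `ℤ_(p)[C_p]` has no idempotent elements
other than `0` and `1`. -/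
theorem groupAlgebra_localization_atPrime_idempotents (p : ℕ) (hp : p.Prime)
    (e : MonoidAlgebra (IntLocAtPrime p hp) (Multiplicative (ZMod p)))
    (he : e * e = e) : e = 0 ∨ e = 1 := by
  have : Fact p.Prime := ⟨hp⟩
  refine MonoidAlgebra.eq_zero_or_one_of_isIdempotentElem_of_isLocalRing p (fun g => ?_) he
  simpa using pow_card_eq_one (G := Multiplicative (ZMod p)) (x := g)
end

section
/- Let p be a prime number and let L be a finitely generated module over the group algebra ℤ_(p)[C_p], where ℤ_(p) is the localization of ℤ at (p). If L is a direct summand (as ℤ_(p)[C_p]-module) of a module of the form ℤ_(p)^a ⊕ (ℤ_(p)[C_p])^b for some natural numbers a, b, where C_p acts trivially on the factor ℤ_(p)^a, then there exist natural numbers c, d such that L is isomorphic as a ℤ_(p)[C_p]-module to ℤ_(p)^c ⊕ (ℤ_(p)[C_p])^d. -/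
/-- `ℤ_(p)^a`, regarded as a module over the group algebra `ℤ_(p)[C_p]` with
trivial `C_p`-action, i.e. with the module structure obtained by restriction of
scalars along the augmentation homomorphism `ℤ_(p)[C_p] → ℤ_(p)`. -/
def TrivModLoc (p : ℕ) (hp : p.Prime) (a : ℕ) : Type :=
  Fin a → IntLocAtPrime p hp

instance (p : ℕ) (hp : p.Prime) (a : ℕ) : AddCommGroup (TrivModLoc p hp a) :=
  inferInstanceAs (AddCommGroup (Fin a → IntLocAtPrime p hp))

noncomputable instance (p : ℕ) (hp : p.Prime) (a : ℕ) :
    Module (MonoidAlgebra (IntLocAtPrime p hp) (Multiplicative (ZMod p)))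
      (TrivModLoc p hp a) :=
  Module.compHom (Fin a → IntLocAtPrime p hp)
    (MonoidAlgebra.lift (IntLocAtPrime p hp) (IntLocAtPrime p hp)
      (Multiplicative (ZMod p)) (1 : Multiplicative (ZMod p) →* IntLocAtPrime p hp)).toRingHom



section Exchange

variable {S : Type} [CommRing S]
variable {L N M₁ M' X M : Type}
variable [AddCommGroup L] [AddCommGroup N] [AddCommGroup M₁] [AddCommGroup M']
variable [AddCommGroup X] [AddCommGroup M]
variable [Module S L] [Module S N] [Module S M₁] [Module S M'] [Module S X] [Module S M]

/-- If `q : X → M` has a section `t`, then `X ≃ M × ker q`. -/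
noncomputable def splitEquiv (q : X →ₗ[S] M) (t : M →ₗ[S] X)
    (h : ∀ m, q (t m) = m) : X ≃ₗ[S] M × (LinearMap.ker q) where
  toFun x := (q x, ⟨x - t (q x), by simp [LinearMap.mem_ker, h]⟩)
  invFun m := t m.1 + (m.2 : X)
  left_inv x := by simp
  right_inv m := by
    obtain ⟨m₁, k, hk⟩ := m
    rw [LinearMap.mem_ker] at hk
    ext
    · simp [h, hk]
    · simp only [map_add, h, hk, add_zero]
      abel
  map_add' x y := by
    ext
    · simp
    · simp only [map_add, Prod.snd_add, Submodule.coe_add]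
      abel
  map_smul' c x := by
    ext
    · simp
    · simp [smul_sub]

theorem exchange_one (φ : (L × N) ≃ₗ[S] (M₁ × M'))
    (h : IsUnit ((LinearMap.fst S M₁ M' ∘ₗ (φ : L × N →ₗ[S] M₁ × M') ∘ₗ LinearMap.inl S L N) ∘ₗ
      (LinearMap.fst S L N ∘ₗ (φ.symm : M₁ × M' →ₗ[S] L × N) ∘ₗ LinearMap.inl S M₁ M'))) :
    ∃ (K : Type) (_ : AddCommGroup K) (_ : Module S K),
      Nonempty (L ≃ₗ[S] (M₁ × K)) ∧ Nonempty ((K × N) ≃ₗ[S] M') := by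
  classical
  set u : L →ₗ[S] M₁ :=
    LinearMap.fst S M₁ M' ∘ₗ (φ : L × N →ₗ[S] M₁ × M') ∘ₗ LinearMap.inl S L N with hu
  set v : M₁ →ₗ[S] L :=
    LinearMap.fst S L N ∘ₗ (φ.symm : M₁ × M' →ₗ[S] L × N) ∘ₗ LinearMap.inl S M₁ M' with hv
  obtain ⟨w, hw⟩ := h
  set q : (L × N) →ₗ[S] M₁ :=
    (↑w⁻¹ : Module.End S M₁) ∘ₗ LinearMap.fst S M₁ M' ∘ₗ (φ : L × N →ₗ[S] M₁ × M') with hq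
  have hqv : ∀ m : M₁, q ((v m, 0) : L × N) = m := by
    intro m
    have h1 : q ((v m, 0) : L × N) = (↑w⁻¹ : Module.End S M₁) ((u ∘ₗ v) m) := rfl
    rw [h1, ← hw]
    show ((↑w⁻¹ * ↑w : Module.End S M₁)) m = m
    rw [w.inv_mul]; rfl
  have hkerfst : ∀ x : L × N, q x = 0 → ((φ x).1 : M₁) = 0 := by
    intro x hx
    have h2 : (↑w : Module.End S M₁) (q x) = (φ x).1 := by
      show ((↑w * ↑w⁻¹ : Module.End S M₁)) ((φ x).1) = (φ x).1
      rw [w.mul_inv]; rfl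
    rw [hx, map_zero] at h2
    exact h2.symm
  set qL : L →ₗ[S] M₁ := q ∘ₗ LinearMap.inl S L N with hqL
  have hqLv : ∀ m, qL (v m) = m := fun m => hqv m
  refine ⟨LinearMap.ker qL, inferInstance, inferInstance, ⟨splitEquiv qL v hqLv⟩, ⟨?_⟩⟩
  set K := LinearMap.ker qL with hK
  -- maps used to build the equivalence (K × N) ≃ M'
  set first : (K × N) →ₗ[S] (L × N) := (K.subtype).prodMap (LinearMap.id : N →ₗ[S] N) with hfirst
  set second : (K × N) →ₗ[S] (L × N) :=
    (LinearMap.inl S L N) ∘ₗ v ∘ₗ q ∘ₗ (LinearMap.inr S L N) ∘ₗ (LinearMap.snd S K N) with hsecond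
  set β : (K × N) →ₗ[S] M' :=
    (LinearMap.snd S M₁ M') ∘ₗ (φ : L × N →ₗ[S] M₁ × M') ∘ₗ (first - second) with hβ
  set ψ1 : M' →ₗ[S] (L × N) := (φ.symm : M₁ × M' →ₗ[S] L × N) ∘ₗ (LinearMap.inr S M₁ M') with hψ1
  set ρ : (L × N) →ₗ[S] (L × N) :=
    LinearMap.id + (LinearMap.inl S L N) ∘ₗ v ∘ₗ q ∘ₗ (LinearMap.inr S L N) ∘ₗ
      (LinearMap.snd S L N) with hρ
  have hρ1 : ∀ x : L × N, (ρ x).1 = x.1 + v (q ((0 : L), x.2)) := by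
    intro x; simp [hρ]
  have hρ2 : ∀ x : L × N, (ρ x).2 = x.2 := by
    intro x; simp [hρ]
  have hqψ1 : ∀ m', q (ψ1 m') = 0 := by
    intro m'
    rw [hψ1, hq]
    simp only [LinearMap.comp_apply, LinearEquiv.coe_coe, LinearEquiv.apply_symm_apply,
      LinearMap.inr_apply, LinearMap.fst_apply]
    exact map_zero _
  have hmem : ∀ m', (LinearMap.fst S L N ∘ₗ ρ ∘ₗ ψ1) m' ∈ K := by
    intro m'
    rw [LinearMap.mem_ker]
    have hd : ((((ρ (ψ1 m')).1 : L), (0 : N)) : L × N)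
        = ψ1 m' - ((0 : L), (ψ1 m').2) + (v (q ((0:L), (ψ1 m').2)), 0) := by
      ext
      · simp [hρ1]
      · simp
    show q ((((ρ (ψ1 m')).1 : L), (0 : N)) : L × N) = 0
    rw [hd, map_add, map_sub, hqv, hqψ1, zero_sub, neg_add_cancel]
  set γ : M' →ₗ[S] (K × N) :=
    (LinearMap.codRestrict K (LinearMap.fst S L N ∘ₗ ρ ∘ₗ ψ1) hmem).prod
      (LinearMap.snd S L N ∘ₗ ψ1) with hγ
  -- the two inverse identities
  have h₁ : β ∘ₗ γ = LinearMap.id := by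
    ext m'
    have hfs : (first - second) (γ m') = ψ1 m' := by
      have e1 : ((first - second) (γ m')).1 = (ψ1 m').1 := by
        simp only [hfirst, hsecond, hγ, LinearMap.sub_apply, LinearMap.comp_apply,
          LinearMap.prodMap_apply, LinearMap.prod_apply, Function.prod, LinearMap.codRestrict_apply,
          LinearMap.inl_apply, LinearMap.inr_apply, LinearMap.snd_apply, LinearMap.fst_apply,
          LinearMap.id_apply, Submodule.coe_subtype, Prod.fst_sub, Prod.snd_sub]
        rw [hρ1]
        simp
      have e2 : ((first - second) (γ m')).2 = (ψ1 m').2 := by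
        simp only [hfirst, hsecond, hγ, LinearMap.sub_apply, LinearMap.comp_apply,
          LinearMap.prodMap_apply, LinearMap.prod_apply, Function.prod, LinearMap.codRestrict_apply,
          LinearMap.inl_apply, LinearMap.inr_apply, LinearMap.snd_apply, LinearMap.fst_apply,
          LinearMap.id_apply, Submodule.coe_subtype, Prod.fst_sub, Prod.snd_sub, sub_zero]
      exact Prod.ext e1 e2
    show ((LinearMap.snd S M₁ M') ∘ₗ (φ : L × N →ₗ[S] M₁ × M') ∘ₗ (first - second)) (γ m')
        = m'
    rw [LinearMap.comp_apply, LinearMap.comp_apply, hfs, hψ1]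
    simp
  have h₂ : γ ∘ₗ β = LinearMap.id := by
    refine LinearMap.ext fun kn => ?_
    obtain ⟨k, n⟩ := kn
    set y : L × N := (first - second) ((k, n) : K × N) with hy
    have hy1 : y.1 = (k : L) - v (q ((0 : L), n)) := by
      simp [hy, hfirst, hsecond]
    have hy2 : y.2 = n := by
      simp [hy, hfirst, hsecond]
    have hqy : q y = 0 := by
      have hd : y = (((k : L), (0 : N)) : L × N) + ((0 : L), n) - (v (q ((0:L), n)), 0) := by
        ext
        · rw [hy1]; simp; try abel
        · rw [hy2]; simp
      rw [hd, map_sub, map_add, hqv]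
      have hk0 : q ((((k : L), (0 : N))) : L × N) = 0 := k.2
      rw [hk0, zero_add, sub_self]
    have hfst : (φ y).1 = 0 := hkerfst y hqy
    have hsymm : ψ1 (β ((k, n) : K × N)) = y := by
      rw [hψ1]
      simp only [LinearMap.comp_apply, LinearMap.inr_apply]
      have : ((0 : M₁), β ((k, n) : K × N)) = φ y := by
        ext
        · exact hfst.symm
        · rfl
      rw [this]
      exact φ.symm_apply_apply y
    show γ (β ((k, n) : K × N)) = ((k, n) : K × N)
    refine Prod.ext (Subtype.ext ?_) ?_
    · show (LinearMap.fst S L N ∘ₗ ρ ∘ₗ ψ1) (β ((k, n) : K × N)) = (k : L)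
      rw [LinearMap.comp_apply, LinearMap.comp_apply, hsymm, LinearMap.fst_apply, hρ1, hy1, hy2]
      abel
    · show (LinearMap.snd S L N ∘ₗ ψ1) (β ((k, n) : K × N)) = n
      rw [LinearMap.comp_apply, hsymm, LinearMap.snd_apply, hy2]
  exact LinearEquiv.ofLinear β γ h₁ h₂

theorem exchange (φ : (L × N) ≃ₗ[S] (M₁ × M'))
    (hloc : ∀ e f : Module.End S M₁, e + f = 1 → IsUnit e ∨ IsUnit f) :
    (∃ (K : Type) (_ : AddCommGroup K) (_ : Module S K),
      Nonempty (L ≃ₗ[S] (M₁ × K)) ∧ Nonempty ((K × N) ≃ₗ[S] M')) ∨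
    (∃ (K : Type) (_ : AddCommGroup K) (_ : Module S K),
      Nonempty (N ≃ₗ[S] (M₁ × K)) ∧ Nonempty ((K × L) ≃ₗ[S] M')) := by
  classical
  set u : L →ₗ[S] M₁ :=
    LinearMap.fst S M₁ M' ∘ₗ (φ : L × N →ₗ[S] M₁ × M') ∘ₗ LinearMap.inl S L N with hu
  set v : M₁ →ₗ[S] L :=
    LinearMap.fst S L N ∘ₗ (φ.symm : M₁ × M' →ₗ[S] L × N) ∘ₗ LinearMap.inl S M₁ M' with hv
  set u' : N →ₗ[S] M₁ :=
    LinearMap.fst S M₁ M' ∘ₗ (φ : L × N →ₗ[S] M₁ × M') ∘ₗ LinearMap.inr S L N with hu'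
  set v' : M₁ →ₗ[S] N :=
    LinearMap.snd S L N ∘ₗ (φ.symm : M₁ × M' →ₗ[S] L × N) ∘ₗ LinearMap.inl S M₁ M' with hv'
  have hsum : (u ∘ₗ v) + (u' ∘ₗ v') = 1 := by
    refine LinearMap.ext fun m => ?_
    set a : L × N := φ.symm ((m, 0) : M₁ × M') with ha
    have hdec : ((a.1, (0:N)) : L × N) + ((0:L), a.2) = a := by ext <;> simp
    show (φ ((a.1, (0:N)) : L × N)).1 + (φ (((0:L), a.2) : L × N)).1 = m
    rw [← Prod.fst_add, ← map_add, hdec, ha, φ.apply_symm_apply]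
  rcases hloc _ _ hsum with hcase | hcase
  · exact Or.inl (exchange_one φ hcase)
  · right
    set φ₂ : (N × L) ≃ₗ[S] (M₁ × M') := (LinearEquiv.prodComm S N L).trans φ with hφ₂
    have hequal :
        (LinearMap.fst S M₁ M' ∘ₗ (φ₂ : N × L →ₗ[S] M₁ × M') ∘ₗ LinearMap.inl S N L) ∘ₗ
          (LinearMap.fst S N L ∘ₗ (φ₂.symm : M₁ × M' →ₗ[S] N × L) ∘ₗ LinearMap.inl S M₁ M')
        = u' ∘ₗ v' := by
      refine LinearMap.ext fun m => ?_
      simp [hφ₂, hu', hv', LinearEquiv.prodComm_apply]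
    exact exchange_one φ₂ (hequal ▸ hcase)

end Exchange

abbrev Rgp (p : ℕ) (hp : p.Prime) : Type :=
  MonoidAlgebra (IntLocAtPrime p hp) (Multiplicative (ZMod p))

noncomputable abbrev aug (p : ℕ) (hp : p.Prime) : Rgp p hp →+* IntLocAtPrime p hp :=
  (MonoidAlgebra.lift (IntLocAtPrime p hp) (IntLocAtPrime p hp)
      (Multiplicative (ZMod p)) (1 : Multiplicative (ZMod p) →* IntLocAtPrime p hp)).toRingHom

lemma aug_algebraMap (p : ℕ) (hp : p.Prime) (c : IntLocAtPrime p hp) :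
    aug p hp (algebraMap (IntLocAtPrime p hp) (Rgp p hp) c) = c := by
  simp [aug]

lemma aug_apply (p : ℕ) (hp : p.Prime) (x : Rgp p hp) :
    aug p hp x = ∑ g ∈ x.coeff.support, x.coeff g := by
  rw [aug]
  show (MonoidAlgebra.lift (IntLocAtPrime p hp) (IntLocAtPrime p hp)
      (Multiplicative (ZMod p)) 1) x = _
  rw [MonoidAlgebra.lift_apply]
  simp [Finsupp.sum]

instance (p : ℕ) (hp : p.Prime) : Module.Finite (IntLocAtPrime p hp) (Rgp p hp) := by
  haveI : NeZero p := ⟨hp.ne_zero⟩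
  exact Module.Finite.equiv (MonoidAlgebra.coeffLinearEquiv (IntLocAtPrime p hp)).symm

theorem Rgp_isLocalRing (p : ℕ) (hp : p.Prime) : IsLocalRing (Rgp p hp) := by
  haveI : NeZero p := ⟨hp.ne_zero⟩
  set θ : Rgp p hp →+* IsLocalRing.ResidueField (IntLocAtPrime p hp) :=
    (IsLocalRing.residue (IntLocAtPrime p hp)).comp (aug p hp) with hθ
  have hθsurj : Function.Surjective θ := by
    intro y
    obtain ⟨c, hc⟩ := IsLocalRing.residue_surjective (R := (IntLocAtPrime p hp)) y
    exact ⟨algebraMap (IntLocAtPrime p hp) (Rgp p hp) c, by rw [hθ, RingHom.comp_apply, aug_algebraMap, hc]⟩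
  have hker : (RingHom.ker θ).IsMaximal := RingHom.ker_isMaximal_of_surjective θ hθsurj
  have hle : ∀ J : Ideal (Rgp p hp), J.IsMaximal → RingHom.ker θ ≤ J := by
    intro J hJ
    haveI := hJ
    have hcomap : (J.comap (algebraMap (IntLocAtPrime p hp) (Rgp p hp))).IsMaximal :=
      Ideal.isMaximal_comap_of_isIntegral_of_isMaximal J
    have hm : J.comap (algebraMap (IntLocAtPrime p hp) (Rgp p hp)) = IsLocalRing.maximalIdeal (IntLocAtPrime p hp) :=
      IsLocalRing.eq_maximalIdeal hcomap
    have halg : ∀ c : (IntLocAtPrime p hp), c ∈ IsLocalRing.maximalIdeal (IntLocAtPrime p hp) → algebraMap (IntLocAtPrime p hp) (Rgp p hp) c ∈ J := by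
      intro c hc
      rw [← hm] at hc
      exact hc
    have hpA : (p : (IntLocAtPrime p hp)) ∈ IsLocalRing.maximalIdeal (IntLocAtPrime p hp) := by
      rw [IsLocalRing.mem_maximalIdeal, mem_nonunits_iff]
      intro hunit
      haveI := Int.span_singleton_prime_isPrime p hp
      rw [show ((p:ℕ) : IntLocAtPrime p hp) = algebraMap ℤ (IntLocAtPrime p hp) ((p:ℕ):ℤ) from
        (map_natCast _ p).symm] at hunit
      exact (IsLocalization.AtPrime.isUnit_to_map_iff (IntLocAtPrime p hp)
        (Ideal.span {(p : ℤ)}) _).mp hunit (Ideal.subset_span rfl)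
    have hpJ : ((p : ℕ) : Rgp p hp) ∈ J := by
      have h' := halg (p : IntLocAtPrime p hp) hpA
      simpa using h'
    have hof : ∀ g : Multiplicative (ZMod p),
        MonoidAlgebra.of (IntLocAtPrime p hp) (Multiplicative (ZMod p)) g - 1 ∈ J := by
      intro g
      refine hJ.isPrime.mem_of_pow_mem p ?_
      obtain ⟨r, hr⟩ : ∃ r, (MonoidAlgebra.of (IntLocAtPrime p hp) (Multiplicative (ZMod p)) g
          + -1) ^ p = (MonoidAlgebra.of (IntLocAtPrime p hp) (Multiplicative (ZMod p)) g) ^ p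
          + (-1 : Rgp p hp) ^ p + (p : Rgp p hp) * r := by
        obtain ⟨r, hr⟩ := Commute.exists_add_pow_prime_eq hp
          (Commute.all (MonoidAlgebra.of (IntLocAtPrime p hp) (Multiplicative (ZMod p)) g) (-1 : Rgp p hp))
        exact ⟨MonoidAlgebra.of (IntLocAtPrime p hp) (Multiplicative (ZMod p)) g * -1 * r,
          by rw [hr]; ring⟩
      have hgp : (MonoidAlgebra.of (IntLocAtPrime p hp) (Multiplicative (ZMod p)) g) ^ p = 1 := by
        rw [← map_pow]
        have hg1 : g ^ p = 1 := by
          have hcard := pow_card_eq_one (G := Multiplicative (ZMod p)) (x := g)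
          rwa [show Fintype.card (Multiplicative (ZMod p)) = p by
            simp [Fintype.card_multiplicative, ZMod.card]] at hcard
        rw [hg1, map_one]
      have heq : (MonoidAlgebra.of (IntLocAtPrime p hp) (Multiplicative (ZMod p)) g - 1) ^ p
          = 1 + (-1 : Rgp p hp) ^ p + (p : Rgp p hp) * r := by
        rw [sub_eq_add_neg, hr, hgp]
      rw [heq]
      refine Ideal.add_mem _ ?_ (Ideal.mul_mem_right _ _ hpJ)
      rcases hp.eq_two_or_odd' with h2 | hodd
      · subst h2
        norm_num
        exact_mod_cast hpJ
      · rw [hodd.neg_one_pow (α := Rgp p hp)]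
        simp
    intro x hx
    have hεx : aug p hp x ∈ IsLocalRing.maximalIdeal (IntLocAtPrime p hp) := by
      rw [RingHom.mem_ker, hθ, RingHom.comp_apply] at hx
      rwa [IsLocalRing.residue_eq_zero_iff] at hx
    have hsingle : ∀ (g : Multiplicative (ZMod p)) (c : (IntLocAtPrime p hp)),
        MonoidAlgebra.single g c - algebraMap (IntLocAtPrime p hp) (Rgp p hp) c ∈ J := by
      intro g c
      have : MonoidAlgebra.single g c - algebraMap (IntLocAtPrime p hp) (Rgp p hp) c
          = algebraMap (IntLocAtPrime p hp) (Rgp p hp) c * (MonoidAlgebra.of (IntLocAtPrime p hp) (Multiplicative (ZMod p)) g - 1) := by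
        rw [mul_sub, mul_one, ← MonoidAlgebra.single_eq_algebraMap_mul_of]
      rw [this]
      exact Ideal.mul_mem_left _ _ (hof g)
    have hdecomp : x - algebraMap (IntLocAtPrime p hp) (Rgp p hp) (aug p hp x) ∈ J := by
      have h1 : x = ∑ g ∈ x.coeff.support, MonoidAlgebra.single g (x.coeff g) := by
        conv_lhs => rw [← MonoidAlgebra.sum_coeff_single x]
        rfl
      have h2 : algebraMap (IntLocAtPrime p hp) (Rgp p hp) (aug p hp x)
          = ∑ g ∈ x.coeff.support, algebraMap (IntLocAtPrime p hp) (Rgp p hp) (x.coeff g) := by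
        rw [aug_apply, map_sum]
      have h3 : x - algebraMap (IntLocAtPrime p hp) (Rgp p hp) (aug p hp x)
          = ∑ g ∈ x.coeff.support, (MonoidAlgebra.single g (x.coeff g)
            - algebraMap (IntLocAtPrime p hp) (Rgp p hp) (x.coeff g)) := by
        rw [Finset.sum_sub_distrib, ← h2, ← h1]
      rw [h3]
      exact Ideal.sum_mem _ fun g _ => hsingle g (x.coeff g)
    have hfin := Ideal.add_mem _ hdecomp (halg _ hεx)
    simpa using hfin
  exact IsLocalRing.of_unique_max_ideal
    ⟨RingHom.ker θ, hker, fun J hJ => (hker.eq_of_le hJ.ne_top (hle J hJ)).symm⟩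

instance (p : ℕ) (hp : p.Prime) (a : ℕ) : Module (IntLocAtPrime p hp) (TrivModLoc p hp a) :=
  inferInstanceAs (Module (IntLocAtPrime p hp) (Fin a → IntLocAtPrime p hp))

instance (p : ℕ) (hp : p.Prime) : Subsingleton (TrivModLoc p hp 0) :=
  inferInstanceAs (Subsingleton (Fin 0 → IntLocAtPrime p hp))

lemma triv_smul (p : ℕ) (hp : p.Prime) (a : ℕ) (r : Rgp p hp) (x : TrivModLoc p hp a) :
    r • x = aug p hp r • x := rfl

lemma triv_smul_apply (p : ℕ) (hp : p.Prime) (a : ℕ) (r : Rgp p hp) (x : TrivModLoc p hp a)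
    (i : Fin a) : (r • x) i = aug p hp r * x i := rfl

lemma triv_algebraMap_smul (p : ℕ) (hp : p.Prime) (a : ℕ) (c : IntLocAtPrime p hp)
    (x : TrivModLoc p hp a) :
    (algebraMap (IntLocAtPrime p hp) (Rgp p hp) c) • x = c • x := by
  rw [triv_smul, aug_algebraMap]

/-- The endomorphism ring of the one-dimensional trivial module is local (dichotomy form). -/
theorem end_triv_local (p : ℕ) (hp : p.Prime)
    (e f : Module.End (Rgp p hp) (TrivModLoc p hp 1)) (hef : e + f = 1) :
    IsUnit e ∨ IsUnit f := by
  classical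
  set one1 : TrivModLoc p hp 1 := fun _ => 1 with hone1
  set Φ : Module.End (Rgp p hp) (TrivModLoc p hp 1) → IntLocAtPrime p hp :=
    fun e => e one1 0 with hΦ
  have hsmul0 : ∀ (c : IntLocAtPrime p hp) (y : TrivModLoc p hp 1) (i : Fin 1),
      ((algebraMap (IntLocAtPrime p hp) (Rgp p hp) c) • y) i = c * y i := by
    intro c y i
    rw [triv_algebraMap_smul]
    rfl
  have hx : ∀ x : TrivModLoc p hp 1,
      x = (algebraMap (IntLocAtPrime p hp) (Rgp p hp) (x 0)) • one1 := by
    intro x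
    funext i
    rw [hsmul0]
    have : i = 0 := Subsingleton.elim i 0
    subst this
    show x 0 = x 0 * 1
    rw [mul_one]
  have happly : ∀ (e : Module.End (Rgp p hp) (TrivModLoc p hp 1)) (x : TrivModLoc p hp 1)
      (i : Fin 1), e x i = x 0 * Φ e := by
    intro e x i
    conv_lhs => rw [hx x, map_smul]
    rw [hsmul0]
    congr 1
    have : i = 0 := Subsingleton.elim i 0
    rw [this]
  have hunit : ∀ e : Module.End (Rgp p hp) (TrivModLoc p hp 1), IsUnit (Φ e) → IsUnit e := by
    intro e he
    obtain ⟨c, hc1, hc2⟩ : ∃ c, c * Φ e = 1 ∧ Φ e * c = 1 := by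
      obtain ⟨u, hu⟩ := he
      exact ⟨↑u⁻¹, by rw [← hu, Units.inv_mul], by rw [← hu, Units.mul_inv]⟩
    set g : Module.End (Rgp p hp) (TrivModLoc p hp 1) :=
      { toFun := fun x => (algebraMap (IntLocAtPrime p hp) (Rgp p hp) c) • x
        map_add' := fun x y => smul_add _ _ _
        map_smul' := fun r x => smul_comm _ r x } with hg
    have hgapply : ∀ (y : TrivModLoc p hp 1) (i : Fin 1), g y i = c * y i := by
      intro y i
      show ((algebraMap (IntLocAtPrime p hp) (Rgp p hp) c) • y) i = c * y i
      rw [hsmul0]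
    have h1 : e * g = 1 := by
      refine LinearMap.ext fun x => funext fun i => ?_
      show e (g x) i = x i
      rw [happly, hgapply]
      have : (i : Fin 1) = 0 := Subsingleton.elim i 0
      rw [this]
      calc c * x 0 * Φ e = (Φ e * c) * x 0 := by ring
        _ = x 0 := by rw [hc2, one_mul]
    have h2 : g * e = 1 := by
      refine LinearMap.ext fun x => funext fun i => ?_
      show g (e x) i = x i
      rw [hgapply, happly]
      have : (i : Fin 1) = 0 := Subsingleton.elim i 0
      rw [this]
      calc c * (x 0 * Φ e) = (c * Φ e) * x 0 := by ring
        _ = x 0 := by rw [hc1, one_mul]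
    exact ⟨⟨e, g, h1, h2⟩, rfl⟩
  have hΦsum : Φ e + Φ f = 1 := by
    have h3 : Φ e + Φ f = (e + f) one1 0 := rfl
    have h4 : ((1 : Module.End (Rgp p hp) (TrivModLoc p hp 1)) one1) 0 = 1 := rfl
    rw [h3, hef, h4]
  haveI := Int.span_singleton_prime_isPrime p hp
  rcases IsLocalRing.isUnit_or_isUnit_of_add_one hΦsum with h | h
  · exact Or.inl (hunit e h)
  · exact Or.inr (hunit f h)

/-- Splitting off the first coordinate of the trivial module. -/
noncomputable def splitT (p : ℕ) (hp : p.Prime) (a : ℕ) :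
    TrivModLoc p hp (a + 1) ≃ₗ[Rgp p hp] (TrivModLoc p hp 1 × TrivModLoc p hp a) where
  toFun f := (fun _ => f 0, fun i => f i.succ)
  invFun x := Fin.cons (x.1 0) x.2
  left_inv f := by
    funext i
    refine Fin.cases ?_ ?_ i
    · exact Fin.cons_zero _ _
    · intro j
      exact Fin.cons_succ _ _ _
  right_inv x := by
    refine Prod.ext ?_ ?_
    · funext i
      have : i = 0 := Subsingleton.elim i 0
      subst this
      show ((Fin.cons (x.1 0) x.2 : Fin (a+1) → IntLocAtPrime p hp)) 0 = x.1 0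
      exact Fin.cons_zero _ _
    · funext i
      show ((Fin.cons (x.1 0) x.2 : Fin (a+1) → IntLocAtPrime p hp)) i.succ = x.2 i
      exact Fin.cons_succ _ _ _
  map_add' f g := rfl
  map_smul' r f := rfl

/-- Adding a zero factor of the trivial module. -/
noncomputable def zeroT (p : ℕ) (hp : p.Prime) (W : Type) [AddCommGroup W]
    [Module (Rgp p hp) W] : W ≃ₗ[Rgp p hp] (TrivModLoc p hp 0 × W) where
  toFun w := (0, w)
  invFun y := y.2
  left_inv w := rfl
  right_inv y := Prod.ext (Subsingleton.elim _ _) rfl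
  map_add' w w' := by
    refine Prod.ext ?_ rfl
    simp
  map_smul' r w := by
    refine Prod.ext ?_ rfl
    simp

theorem aux_ind (p : ℕ) (hp : p.Prime) (a : ℕ) :
    ∀ (b : ℕ) (L N : Type) [AddCommGroup L] [AddCommGroup N]
      [Module (Rgp p hp) L] [Module (Rgp p hp) N] [Module.Finite (Rgp p hp) L],
      ((L × N) ≃ₗ[Rgp p hp] (TrivModLoc p hp a × (Fin b → Rgp p hp))) →
      ∃ c d, Nonempty (L ≃ₗ[Rgp p hp] (TrivModLoc p hp c × (Fin d → Rgp p hp))) := by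
  induction a with
  | zero =>
    intro b L N _ _ _ _ _ φ
    let φ' : (L × N) ≃ₗ[Rgp p hp] (Fin b → Rgp p hp) :=
      φ.trans (zeroT p hp (Fin b → Rgp p hp)).symm
    haveI : Module.Projective (Rgp p hp) L := by
      refine Module.Projective.of_split (M := Fin b → Rgp p hp)
        ((φ' : (L × N) →ₗ[Rgp p hp] (Fin b → Rgp p hp)) ∘ₗ LinearMap.inl (Rgp p hp) L N)
        (LinearMap.fst (Rgp p hp) L N ∘ₗ (φ'.symm : (Fin b → Rgp p hp) →ₗ[Rgp p hp] (L × N))) ?_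
      refine LinearMap.ext fun x => ?_
      simp
    haveI := Rgp_isLocalRing p hp
    haveI : Module.FinitePresentation (Rgp p hp) L :=
      Module.finitePresentation_of_projective _ _
    haveI : Module.Free (Rgp p hp) L := Module.free_of_flat_of_isLocalRing
    let B := Module.Free.chooseBasis (Rgp p hp) L
    refine ⟨0, Fintype.card (Module.Free.ChooseBasisIndex (Rgp p hp) L), ⟨?_⟩⟩
    exact (B.equivFun.trans
      (LinearEquiv.funCongrLeft (Rgp p hp) (Rgp p hp)
        (Fintype.equivFin (Module.Free.ChooseBasisIndex (Rgp p hp) L))).symm).trans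
      (zeroT p hp _)
  | succ a IH =>
    intro b L N _ _ _ _ _ φ
    let ψ : (TrivModLoc p hp (a + 1) × (Fin b → Rgp p hp)) ≃ₗ[Rgp p hp]
        (TrivModLoc p hp 1 × (TrivModLoc p hp a × (Fin b → Rgp p hp))) :=
      ((splitT p hp a).prodCongr (LinearEquiv.refl (Rgp p hp) (Fin b → Rgp p hp))).trans
        (LinearEquiv.prodAssoc (Rgp p hp) _ _ _)
    have Φ := φ.trans ψ
    rcases exchange Φ (end_triv_local p hp) with
      ⟨K, hKg, hKm, ⟨e1⟩, ⟨e2⟩⟩ | ⟨K, hKg, hKm, ⟨e1⟩, ⟨e2⟩⟩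
    · letI := hKg
      letI := hKm
      haveI : Module.Finite (Rgp p hp) K := by
        refine Module.Finite.of_surjective
          ((LinearMap.snd (Rgp p hp) (TrivModLoc p hp 1) K) ∘ₗ
            (e1 : L →ₗ[Rgp p hp] (TrivModLoc p hp 1 × K))) ?_
        intro k
        exact ⟨e1.symm (0, k), by simp⟩
      obtain ⟨c, d, ⟨eK⟩⟩ := IH b K N e2
      refine ⟨c + 1, d, ⟨?_⟩⟩
      exact e1.trans
        (((LinearEquiv.refl (Rgp p hp) (TrivModLoc p hp 1)).prodCongr eK).trans
          (((LinearEquiv.prodAssoc (Rgp p hp) _ _ _).symm).trans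
            ((splitT p hp c).symm.prodCongr (LinearEquiv.refl (Rgp p hp) (Fin d → Rgp p hp)))))
    · letI := hKg
      letI := hKm
      exact IH b L K ((LinearEquiv.prodComm (Rgp p hp) L K).trans e2)
/-- Krull–Schmidt over `ℤ_(p)[C_p]`: any finitely generated `ℤ_(p)[C_p]`-module
that is a direct summand of a module of the form `ℤ_(p)^a ⊕ (ℤ_(p)[C_p])^b`
(with trivial `C_p`-action on `ℤ_(p)^a`) is itself isomorphic to a module of
the form `ℤ_(p)^c ⊕ (ℤ_(p)[C_p])^d`. -/
theorem summand_iso_trivial_sum_free (p : ℕ) (hp : p.Prime)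
    (L : Type) [AddCommGroup L]
    [Module (MonoidAlgebra (IntLocAtPrime p hp) (Multiplicative (ZMod p))) L]
    [Module.Finite (MonoidAlgebra (IntLocAtPrime p hp) (Multiplicative (ZMod p))) L]
    (hsum : ∃ (a b : ℕ) (N : Type) (_ : AddCommGroup N)
      (_ : Module (MonoidAlgebra (IntLocAtPrime p hp) (Multiplicative (ZMod p))) N),
      Nonempty ((L × N) ≃ₗ[MonoidAlgebra (IntLocAtPrime p hp) (Multiplicative (ZMod p))]
        (TrivModLoc p hp a ×
          (Fin b → MonoidAlgebra (IntLocAtPrime p hp) (Multiplicative (ZMod p)))))) :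
    ∃ (c d : ℕ),
      Nonempty (L ≃ₗ[MonoidAlgebra (IntLocAtPrime p hp) (Multiplicative (ZMod p))]
        (TrivModLoc p hp c ×
          (Fin d → MonoidAlgebra (IntLocAtPrime p hp) (Multiplicative (ZMod p))))) := by

  obtain ⟨a, b, N, iN1, iN2, ⟨φ⟩⟩ := hsum
  letI := iN1
  letI := iN2
  exact aux_ind p hp a b L N φ
end

section
/- Let p be a prime number and let M be a module over the group algebra ℤ[C_p] that is finitely generated and free as a ℤ-module. If the C_p-action on M is nontrivial (some group element acts non-identically), then M contains a ℤ[C_p]-submodule M' whose rank as a ℤ-module equals p − 1 and on which the C_p-action is nontrivial. -/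
/-!
Let `g` act nontrivially on `x` and put `w = (g - 1) • x ≠ 0`. Since `Φ_p(X) (X - 1) = X ^ p - 1`,
the cyclotomic polynomial `Φ_p` kills `w` when `X` acts as `g`. The annihilator of `w` in `ℤ[X]`
is then exactly `(Φ_p)`: a strictly larger ideal would give a nonzero ideal of the domain
`ℤ[X] ⧸ (Φ_p)`, which is integral over `ℤ`, hence would contain a nonzero integer, contradicting
torsion-freeness. As `g` generates `C_p`, the submodule `ℤ[C_p] • w` is the image of `ℤ[X]`, so it
is isomorphic to `ℤ[X] ⧸ (Φ_p)` and has rank `deg Φ_p = p - 1`. Finally `g` moves `w`, for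
otherwise `Φ_p(g) • w = Φ_p(1) • w = p • w` would vanish.
-/

open Polynomial

namespace Polynomial

variable {R A M : Type*} [CommRing R] [Ring A] [Algebra R A] [AddCommGroup M] [Module A M]
  [Module R M] [IsScalarTower R A M]

noncomputable def aevalSMul (s : A) (w : M) : R[X] →ₗ[R] M :=
  (LinearMap.toSpanSingleton A M w).restrictScalars R ∘ₗ (aeval s).toLinearMap

@[simp]
theorem aevalSMul_apply (s : A) (w : M) (q : R[X]) : aevalSMul s w q = aeval s q • w := rfl

theorem aevalSMul_mul (s : A) (w : M) (q r : R[X]) :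
    aevalSMul s w (q * r) = aeval s q • aevalSMul s w r := by
  simp [mul_smul]

theorem ker_aevalSMul_eq_span [IsDomain R] [Module.IsTorsionFree R M] {f : R[X]}
    (hmonic : f.Monic) (hprime : Prime f) {s : A} {w : M} (hf : aeval s f • w = 0)
    (hw : w ≠ 0) : LinearMap.ker (aevalSMul s w) = (Ideal.span {f}).restrictScalars R := by
  have aevalSMul_of_dvd : ∀ q, f ∣ q → aevalSMul s w q = 0 := by
    rintro _ ⟨c, rfl⟩
    rw [mul_comm, aevalSMul_mul, aevalSMul_apply, hf, smul_zero]
  ext q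
  simp only [LinearMap.mem_ker, Submodule.restrictScalars_mem, Ideal.mem_span_singleton]
  refine ⟨fun hq => ?_, aevalSMul_of_dvd q⟩
  by_contra hfq
  have := AdjoinRoot.isDomain_of_prime hprime
  have := hmonic.finite_adjoinRoot
  have hq0 : AdjoinRoot.mk f q ≠ 0 := by rwa [Ne, AdjoinRoot.mk_eq_zero]
  -- `AdjoinRoot f` is a domain integral over `R`, so the nonzero ideal `(q)` meets `R`.
  obtain ⟨n, hn, hn0⟩ := Submodule.ne_bot_iff _ |>.mp <|
    Ideal.comap_ne_bot_of_integral_mem hq0 (Ideal.mem_span_singleton_self _)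
      (IsIntegral.of_finite R _)
  obtain ⟨b, hb⟩ := Ideal.mem_span_singleton'.mp (Ideal.mem_comap.mp hn)
  obtain ⟨b, rfl⟩ := AdjoinRoot.mk_surjective b
  have hdvd : f ∣ b * q - C n := by
    rw [← AdjoinRoot.mk_eq_zero, map_sub, map_mul, hb, AdjoinRoot.mk_C,
      AdjoinRoot.algebraMap_eq, sub_self]
  have hnw := aevalSMul_of_dvd _ hdvd
  rw [map_sub, aevalSMul_mul, hq, smul_zero, zero_sub, neg_eq_zero, aevalSMul_apply, aeval_C,
    algebraMap_smul] at hnw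
  exact hw ((smul_eq_zero.mp hnw).resolve_left hn0)

theorem finrank_range_eq_natDegree_of_ker_eq [Nontrivial R] {N : Type*} [AddCommGroup N]
    [Module R N] (φ : R[X] →ₗ[R] N) {f : R[X]} (hf : f.Monic)
    (hker : LinearMap.ker φ = (Ideal.span {f}).restrictScalars R) :
    Module.finrank R (LinearMap.range φ) = f.natDegree := by
  rw [← φ.quotKerEquivRange.finrank_eq, (Submodule.quotEquivOfEq _ _ hker).finrank_eq,
    (Submodule.Quotient.restrictScalarsEquiv R _).finrank_eq, ← AdjoinRoot.powerBasis'_dim hf]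
  exact (AdjoinRoot.powerBasis' hf).finrank

theorem range_aevalSMul {s : A} (hs : Function.Surjective (aeval (R := R) s)) (w : M) :
    LinearMap.range (aevalSMul s w) = (Submodule.span A {w}).restrictScalars R := by
  ext m
  simp only [LinearMap.mem_range, aevalSMul_apply, Submodule.restrictScalars_mem,
    Submodule.mem_span_singleton]
  constructor
  · rintro ⟨q, hq⟩
    exact ⟨aeval s q, hq⟩
  · rintro ⟨a, rfl⟩
    obtain ⟨q, rfl⟩ := hs a
    exact ⟨q, rfl⟩

theorem aeval_smul_eq_eval_one_smul {s : A} {w : M} (h : s • w = w) (q : R[X]) :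
    aeval s q • w = q.eval 1 • w := by
  induction q using Polynomial.induction_on' with
  | add q r hq hr => rw [map_add, add_smul, hq, hr, eval_add, add_smul]
  | monomial n c =>
    have hpow : s ^ n • w = w := by
      induction n with
      | zero => rw [pow_zero, one_smul]
      | succ n ih => rw [pow_succ, mul_smul, h, ih]
    rw [aeval_monomial, eval_monomial, one_pow, mul_one, mul_smul, hpow, algebraMap_smul]

theorem aeval_cyclotomic_smul_sub_eq_zero {p : ℕ} [Fact p.Prime] {s : A} (hs : s ^ p = 1)
    (x : M) : aeval s (cyclotomic p R) • (s • x - x) = 0 := by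
  have hx : s • x - x = aevalSMul (R := R) s x (X - 1) := by simp [sub_smul]
  rw [hx, ← aevalSMul_mul, cyclotomic_prime_mul_X_sub_one]
  simp [hs]

end Polynomial

theorem exists_pow_eq_of_card_eq_prime {G : Type*} [Group G] {p : ℕ} [Fact p.Prime]
    (hG : Nat.card G = p) {g : G} (hg : g ≠ 1) (h : G) : ∃ n : ℕ, g ^ n = h := by
  have : Finite G := Nat.finite_of_card_ne_zero (hG ▸ (Fact.out : p.Prime).ne_zero)
  exact mem_powers_iff_mem_zpowers.mpr (zpowers_eq_top_of_prime_card hG hg ▸ Subgroup.mem_top h)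

theorem MonoidAlgebra.aeval_of_surjective {k G : Type*} [CommSemiring k] [Monoid G] {g : G}
    (hg : ∀ h, ∃ n : ℕ, g ^ n = h) :
    Function.Surjective (aeval (R := k) (MonoidAlgebra.of k G g)) := by
  intro a
  induction a using MonoidAlgebra.induction_on with
  | of h =>
    obtain ⟨n, rfl⟩ := hg h
    exact ⟨X ^ n, by simp⟩
  | add a b ha hb =>
    obtain ⟨q, rfl⟩ := ha
    obtain ⟨r, rfl⟩ := hb
    exact ⟨q + r, map_add _ _ _⟩
  | smul c a ha =>
    obtain ⟨q, rfl⟩ := ha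
    exact ⟨c • q, map_smul _ _ _⟩

open MonoidAlgebra in
theorem exists_submodule_finrank_eq_sub_one_of_card_eq_prime {G : Type*} [Group G] {p : ℕ}
    [Fact p.Prime] (hG : Nat.card G = p) (M : Type*) [AddCommGroup M]
    [Module (MonoidAlgebra ℤ G) M] [Module.IsTorsionFree ℤ M]
    (hnt : ∃ (g : G) (x : M), of ℤ G g • x ≠ x) :
    ∃ M' : Submodule (MonoidAlgebra ℤ G) M, Module.finrank ℤ M' = p - 1 ∧
      ∃ (g : G) (x : M'), of ℤ G g • x ≠ x := by
  obtain ⟨g, x, hgx⟩ := hnt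
  have hg : g ≠ 1 := by
    rintro rfl
    rw [map_one, one_smul] at hgx
    exact hgx rfl
  set s := of ℤ G g
  set w := s • x - x
  have hw : w ≠ 0 := sub_ne_zero.mpr hgx
  have hsp : s ^ p = 1 := by rw [← map_pow, ← hG, pow_card_eq_one', map_one]
  have hΦ : aeval s (cyclotomic p ℤ) • w = 0 := aeval_cyclotomic_smul_sub_eq_zero hsp x
  have hker := ker_aevalSMul_eq_span (cyclotomic.monic p ℤ)
    (cyclotomic.irreducible (Fact.out : p.Prime).pos).prime hΦ hw
  refine ⟨Submodule.span _ {w}, ?_, g, ⟨w, Submodule.mem_span_singleton_self w⟩, fun h => ?_⟩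
  · have hsurj : Function.Surjective (aeval (R := ℤ) s) :=
      aeval_of_surjective (exists_pow_eq_of_card_eq_prime hG hg)
    change Module.finrank ℤ ((Submodule.span _ {w}).restrictScalars ℤ) = p - 1
    rw [← range_aevalSMul hsurj,
      finrank_range_eq_natDegree_of_ker_eq _ (cyclotomic.monic p ℤ) hker, natDegree_cyclotomic,
      Nat.totient_prime Fact.out]
  · have hsw : s • w = w := congrArg Subtype.val h
    rw [aeval_smul_eq_eval_one_smul hsw, eval_one_cyclotomic_prime] at hΦ
    exact hw ((smul_eq_zero.mp hΦ).resolve_left (by exact_mod_cast (Fact.out : p.Prime).ne_zero))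

theorem exists_submodule_rank_sub_one_nontrivial_general (p : ℕ) (hp : p.Prime)
    (M : Type) [AddCommGroup M]
    [Module (MonoidAlgebra ℤ (Multiplicative (ZMod p))) M]
    [Module.Free ℤ M]
    (hnt : ∃ (g : Multiplicative (ZMod p)) (x : M),
      MonoidAlgebra.of ℤ (Multiplicative (ZMod p)) g • x ≠ x) :
    ∃ M' : Submodule (MonoidAlgebra ℤ (Multiplicative (ZMod p))) M,
      Module.finrank ℤ M' = p - 1 ∧
      ∃ (g : Multiplicative (ZMod p)) (x : M'),
        MonoidAlgebra.of ℤ (Multiplicative (ZMod p)) g • x ≠ x := by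
  have : Fact p.Prime := ⟨hp⟩
  exact exists_submodule_finrank_eq_sub_one_of_card_eq_prime (by simp) M hnt

/-- Let `p` be prime and `M` a `ℤ[C_p]`-module, finitely generated and free as a
`ℤ`-module. If the `C_p`-action on `M` is nontrivial, then `M` contains a
`ℤ[C_p]`-submodule `M'` of rank `p - 1` over `ℤ` on which the `C_p`-action is
nontrivial. -/
theorem exists_submodule_rank_sub_one_nontrivial (p : ℕ) (hp : p.Prime)
    (M : Type) [AddCommGroup M]
    [Module (MonoidAlgebra ℤ (Multiplicative (ZMod p))) M]
    [Module.Finite ℤ M] [Module.Free ℤ M]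
    (hnt : ∃ (g : Multiplicative (ZMod p)) (x : M),
      MonoidAlgebra.of ℤ (Multiplicative (ZMod p)) g • x ≠ x) :
    ∃ M' : Submodule (MonoidAlgebra ℤ (Multiplicative (ZMod p))) M,
      Module.finrank ℤ M' = p - 1 ∧
      ∃ (g : Multiplicative (ZMod p)) (x : M'),
        MonoidAlgebra.of ℤ (Multiplicative (ZMod p)) g • x ≠ x :=
  exists_submodule_rank_sub_one_nontrivial_general p hp M hnt
end

section
/- Let p be a prime number and let M be a module over the group algebra ℤ[C_p] that is finitely generated and free as a ℤ-module. Suppose that every ℤ[C_p]-submodule M' of M is invertible, i.e., is a direct summand, as a ℤ[C_p]-module, of some module of the form ℤ^a ⊕ (ℤ[C_p])^b with C_p acting trivially on the factor ℤ^a. Then the C_p-action on M is trivial, i.e., every element of C_p acts on M as the identity. -/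
/-- `ℤ^a`, regarded as a module over the group algebra `ℤ[C_p]` with trivial
`C_p`-action, i.e. with the module structure obtained by restriction of scalars
along the augmentation homomorphism `ℤ[C_p] → ℤ`. -/
def TrivModInt (p : ℕ) (a : ℕ) : Type := Fin a → ℤ

instance (p a : ℕ) : AddCommGroup (TrivModInt p a) :=
  inferInstanceAs (AddCommGroup (Fin a → ℤ))

noncomputable instance (p a : ℕ) :
    Module (MonoidAlgebra ℤ (Multiplicative (ZMod p))) (TrivModInt p a) :=
  Module.compHom (Fin a → ℤ)
    (MonoidAlgebra.lift ℤ ℤ (Multiplicative (ZMod p))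
      (1 : Multiplicative (ZMod p) →* ℤ)).toRingHom

noncomputable section AuxCp

abbrev AuxG (p : ℕ) := Multiplicative (ZMod p)
abbrev AuxR (p : ℕ) := MonoidAlgebra ℤ (AuxG p)

/-- the augmentation map -/
def auxEps (p : ℕ) : AuxR p →ₐ[ℤ] ℤ :=
  MonoidAlgebra.lift ℤ ℤ (AuxG p) (1 : AuxG p →* ℤ)

/-- a generator of `C_p` -/
def auxSigma (p : ℕ) : AuxR p :=
  MonoidAlgebra.of ℤ (AuxG p) (Multiplicative.ofAdd 1)

/-- the norm element -/
def auxNorm (p : ℕ) [NeZero p] : AuxR p :=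
  ∑ g : AuxG p, MonoidAlgebra.of ℤ (AuxG p) g

variable (p : ℕ)

theorem auxEps_of (g : AuxG p) : auxEps p (MonoidAlgebra.of ℤ (AuxG p) g) = 1 := by
  simp [auxEps]

theorem auxEps_norm [NeZero p] : auxEps p (auxNorm p) = p := by
  rw [auxNorm, map_sum]
  simp [auxEps, MonoidAlgebra.lift_single, ZMod.card]

theorem auxNorm_ne_zero [NeZero p] : auxNorm p ≠ 0 := by
  intro h
  have := auxEps_norm p
  rw [h, map_zero] at this
  exact (NeZero.ne p) (by exact_mod_cast this.symm)

theorem auxNorm_mul_of [NeZero p] (g : AuxG p) :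
    auxNorm p * MonoidAlgebra.of ℤ (AuxG p) g = auxNorm p := by
  rw [auxNorm, Finset.sum_mul]
  refine Fintype.sum_equiv (Equiv.mulRight g) _ _ fun h => ?_
  simp [MonoidAlgebra.of_apply, MonoidAlgebra.single_mul_single]

theorem auxNorm_mul [NeZero p] (y : AuxR p) :
    auxNorm p * y = auxEps p y • auxNorm p := by
  induction y using MonoidAlgebra.induction_on with
  | of g => rw [auxNorm_mul_of, auxEps_of, one_smul]
  | add f g hf hg => rw [mul_add, hf, hg, map_add, add_smul]
  | smul r f hf => rw [mul_smul_comm, hf, map_smul, smul_assoc]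

theorem auxSigma_pow (k : ℕ) :
    auxSigma p ^ k = MonoidAlgebra.of ℤ (AuxG p) (Multiplicative.ofAdd (k : ZMod p)) := by
  rw [auxSigma, ← map_pow]
  congr 1
  rw [← ofAdd_nsmul]
  congr 1
  simp [nsmul_eq_mul]

theorem auxSigma_pow_sub_one_mem (k : ℕ) :
    auxSigma p ^ k - 1 ∈ Ideal.span {auxSigma p - 1} := by
  induction k with
  | zero => simp
  | succ n ih =>
      have : auxSigma p ^ (n + 1) - 1 =
          auxSigma p * (auxSigma p ^ n - 1) + (auxSigma p - 1) := by ring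
      rw [this]
      exact Ideal.add_mem _ (Ideal.mul_mem_left _ _ ih)
        (Ideal.subset_span rfl)

theorem aux_of_sub_one_mem [NeZero p] (g : AuxG p) :
    MonoidAlgebra.of ℤ (AuxG p) g - 1 ∈ Ideal.span {auxSigma p - 1} := by
  have hg : auxSigma p ^ (Multiplicative.toAdd g).val = MonoidAlgebra.of ℤ (AuxG p) g := by
    rw [auxSigma_pow]
    congr 1
    rw [ZMod.natCast_val, ZMod.cast_id]
    rfl
  rw [← hg]
  exact auxSigma_pow_sub_one_mem p _

theorem aux_mem_span_of_eps_eq_zero [NeZero p] (y : AuxR p) (h : auxEps p y = 0) :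
    y ∈ Ideal.span {auxSigma p - 1} := by
  have key : ∀ z : AuxR p, z - auxEps p z • 1 ∈ Ideal.span {auxSigma p - 1} := by
    intro z
    induction z using MonoidAlgebra.induction_on with
    | of g =>
        rw [auxEps_of, one_smul]
        exact aux_of_sub_one_mem p g
    | add f g hf hg =>
        have : f + g - auxEps p (f + g) • 1 =
            (f - auxEps p f • 1) + (g - auxEps p g • 1) := by
          rw [map_add, add_smul]; abel
        rw [this]
        exact Submodule.add_mem _ hf hg
    | smul r f hf =>
        have : r • f - auxEps p (r • f) • 1 = r • (f - auxEps p f • 1) := by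
          rw [map_smul, smul_sub, smul_assoc]
        rw [this]
        exact Submodule.smul_of_tower_mem _ r hf
  have := key y
  rwa [h, zero_smul, sub_zero] at this

theorem auxSigma_pow_p (hp : p.Prime) : auxSigma p ^ p = 1 := by
  haveI : NeZero p := ⟨hp.ne_zero⟩
  rw [auxSigma_pow, ZMod.natCast_self]
  rfl

theorem aux_sigma_sub_one_pow (hp : p.Prime) :
    ∃ t : AuxR p, (auxSigma p - 1) ^ p = (p : AuxR p) * t := by
  haveI : Fact p.Prime := ⟨hp⟩
  -- polynomial identity: (X-1)^p ≡ X^p - 1 mod p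
  have hdvd : (Polynomial.C (p : ℤ)) ∣
      ((Polynomial.X - 1) ^ p - (Polynomial.X ^ p - 1) : Polynomial ℤ) := by
    rw [Polynomial.C_dvd_iff_dvd_coeff]
    intro n
    have hmap : (((Polynomial.X - 1) ^ p - (Polynomial.X ^ p - 1) : Polynomial ℤ).map
        (Int.castRingHom (ZMod p))) = 0 := by
      push_cast [Polynomial.map_sub, Polynomial.map_pow, Polynomial.map_one,
        Polynomial.map_X]
      rw [sub_pow_char]
      simp
    have := congrArg (fun q => Polynomial.coeff q n) hmap
    simp only [Polynomial.coeff_map, Polynomial.coeff_zero] at this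
    exact_mod_cast (ZMod.intCast_zmod_eq_zero_iff_dvd _ p).mp this
  obtain ⟨r, hr⟩ := hdvd
  refine ⟨Polynomial.aeval (auxSigma p) r, ?_⟩
  have := congrArg (Polynomial.aeval (auxSigma p)) hr
  simp only [map_sub, map_pow, map_mul, Polynomial.aeval_X, Polynomial.aeval_one,
    Polynomial.aeval_C] at this
  rw [auxSigma_pow_p p hp] at this
  simpa using this

theorem trivModInt_smul_def (a : ℕ) (r : AuxR p) (v : TrivModInt p a) :
    r • v = auxEps p r • v := rfl

/-- solvability of `(σ-1) z = y` on a "permutation" module when `Norm • y = 0` -/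
theorem aux_div_step [NeZero p] (a b : ℕ)
    (y : TrivModInt p a × (Fin b → AuxR p)) (h : auxNorm p • y = 0) :
    ∃ z, y = (auxSigma p - 1) • z := by
  have h1 : auxNorm p • y.1 = 0 := by rw [← Prod.smul_fst, h]; rfl
  have h2 : auxNorm p • y.2 = 0 := by rw [← Prod.smul_snd, h]; rfl
  -- first component vanishes
  have hy1 : y.1 = 0 := by
    rw [trivModInt_smul_def, auxEps_norm] at h1
    have hpz : (p : ℤ) ≠ 0 := by exact_mod_cast NeZero.ne p
    haveI : NoZeroSMulDivisors ℤ (TrivModInt p a) :=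
      inferInstanceAs (NoZeroSMulDivisors ℤ (Fin a → ℤ))
    exact (smul_eq_zero.mp h1).resolve_left hpz
  -- second component is divisible by σ - 1
  have hy2 : ∀ i, ∃ c, c * (auxSigma p - 1) = y.2 i := by
    intro i
    have hni : auxNorm p * y.2 i = 0 := by
      have := congrFun h2 i
      simpa using this
    rw [auxNorm_mul] at hni
    have heps : auxEps p (y.2 i) = 0 := by
      have := congrArg (auxEps p) hni
      rw [map_zsmul, auxEps_norm, map_zero, smul_eq_mul] at this
      rcases mul_eq_zero.mp this with h' | h'
      · exact h'
      · exact absurd h' (by exact_mod_cast NeZero.ne p)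
    have := aux_mem_span_of_eps_eq_zero p _ heps
    exact Ideal.mem_span_singleton'.mp this
  choose c hc using hy2
  refine ⟨(0, c), ?_⟩
  refine Prod.ext ?_ ?_
  · simp [Prod.smul_fst, hy1]
  · rw [Prod.smul_snd]
    funext i
    simp only [Pi.smul_apply, smul_eq_mul]
    rw [← hc i]
    exact mul_comm _ _

end AuxCp

set_option maxHeartbeats 1000000 in
/-- Let `p` be prime and `M` a `ℤ[C_p]`-module, finitely generated and free as a
`ℤ`-module. If every `ℤ[C_p]`-submodule `M'` of `M` is invertible, i.e. a direct
summand of some `ℤ^a ⊕ (ℤ[C_p])^b` (with trivial `C_p`-action on `ℤ^a`), then the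
`C_p`-action on `M` is trivial. -/
theorem action_trivial_of_all_submodules_invertible (p : ℕ) (hp : p.Prime)
    (M : Type) [AddCommGroup M]
    [Module (MonoidAlgebra ℤ (Multiplicative (ZMod p))) M]
    [Module.Finite ℤ M] [Module.Free ℤ M]
    (hinv : ∀ M' : Submodule (MonoidAlgebra ℤ (Multiplicative (ZMod p))) M,
      ∃ (a b : ℕ) (N : Type) (_ : AddCommGroup N)
        (_ : Module (MonoidAlgebra ℤ (Multiplicative (ZMod p))) N),
        Nonempty ((M' × N) ≃ₗ[MonoidAlgebra ℤ (Multiplicative (ZMod p))]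
          (TrivModInt p a × (Fin b → MonoidAlgebra ℤ (Multiplicative (ZMod p)))))) :
    ∀ (g : Multiplicative (ZMod p)) (x : M),
      MonoidAlgebra.of ℤ (Multiplicative (ZMod p)) g • x = x := by
  haveI : Fact p.Prime := ⟨hp⟩
  haveI : NeZero p := ⟨hp.ne_zero⟩
  -- the kernel of multiplication by the norm element
  set Nsub : Submodule (AuxR p) M :=
    LinearMap.ker (LinearMap.lsmul (AuxR p) M (auxNorm p)) with hNsub
  have memN : ∀ x : M, x ∈ Nsub ↔ auxNorm p • x = 0 := fun x => by
    simp [hNsub, LinearMap.mem_ker]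
  obtain ⟨a, b, N', instA, instM, ⟨e⟩⟩ := hinv Nsub
  -- one division step: every element of Nsub is divisible by σ - 1 inside Nsub
  have step : ∀ x : M, x ∈ Nsub → ∃ w ∈ Nsub, x = (auxSigma p - 1) • w := by
    intro x hx
    have hx0 : auxNorm p • x = 0 := (memN x).mp hx
    set xx : Nsub := ⟨x, hx⟩ with hxx
    have hpair : auxNorm p • ((xx, (0 : N')) : Nsub × N') = 0 := by
      refine Prod.ext ?_ ?_
      · rw [Prod.smul_fst]
        exact Subtype.ext hx0
      · rw [Prod.smul_snd]
        exact smul_zero _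
    have hNy : auxNorm p • e (xx, 0) = 0 := by
      rw [← map_smul, hpair, map_zero]
    obtain ⟨z, hz⟩ := aux_div_step p a b _ hNy
    have h2 : ((xx, (0 : N')) : Nsub × N') = (auxSigma p - 1) • e.symm z := by
      have := congrArg e.symm hz
      rwa [e.symm_apply_apply, map_smul] at this
    refine ⟨((e.symm z).1 : M), (e.symm z).1.2, ?_⟩
    have h3 := congrArg (fun q : Nsub × N' => (q.1 : M)) h2
    simp only [Prod.smul_fst, Submodule.coe_smul] at h3
    exact h3
  -- iterate the division step
  have stepk : ∀ k : ℕ, ∀ x ∈ Nsub, ∃ w ∈ Nsub, x = (auxSigma p - 1) ^ k • w := by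
    intro k
    induction k with
    | zero => intro x hx; exact ⟨x, hx, by simp⟩
    | succ n ih =>
        intro x hx
        obtain ⟨w, hw, hxw⟩ := step x hx
        obtain ⟨v, hv, hwv⟩ := ih w hw
        exact ⟨v, hv, by rw [hxw, hwv, ← mul_smul, ← pow_succ']⟩
  -- hence every element of Nsub is divisible by p inside Nsub
  obtain ⟨t, ht⟩ := aux_sigma_sub_one_pow p hp
  have stepp : ∀ x ∈ Nsub, ∃ v ∈ Nsub, x = (p : ℤ) • v := by
    intro x hx
    obtain ⟨w, hw, hxw⟩ := stepk p x hx
    refine ⟨t • w, Nsub.smul_mem t hw, ?_⟩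
    have hcast : ((p : ℤ) : AuxR p) = (p : AuxR p) := by push_cast; ring
    rw [hxw, ht, mul_smul, ← hcast, Int.cast_smul_eq_zsmul]
  have steppk : ∀ k : ℕ, ∀ x ∈ Nsub, ∃ v : M, x = (p : ℤ) ^ k • v := by
    intro k
    induction k with
    | zero => intro x hx; exact ⟨x, by simp⟩
    | succ n ih =>
        intro x hx
        obtain ⟨w, hw, hxw⟩ := stepp x hx
        obtain ⟨v, hv⟩ := ih w hw
        exact ⟨v, by rw [hxw, hv, smul_smul, ← pow_succ']⟩
  -- infinitely p-divisible elements of a finite free ℤ-module vanish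
  have hzero : ∀ x ∈ Nsub, x = (0 : M) := by
    intro x hx
    let B := Module.Free.chooseBasis ℤ M
    have coord : ∀ i, B.repr x i = 0 := by
      intro i
      by_contra hne
      set c : ℤ := B.repr x i with hc
      obtain ⟨v, hv⟩ := steppk c.natAbs x hx
      have hrepr := congrArg (fun m => B.repr m i) hv
      simp only [map_smul, Finsupp.smul_apply, smul_eq_mul] at hrepr
      have hdvd : (p : ℤ) ^ c.natAbs ∣ c := ⟨B.repr v i, hrepr⟩
      have habs : (p : ℤ) ^ c.natAbs ≤ (c.natAbs : ℤ) := by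
        have := Int.le_of_dvd (abs_pos.mpr hne) ((dvd_abs _ _).mpr hdvd)
        rwa [Int.abs_eq_natAbs] at this
      have hnat : p ^ c.natAbs ≤ c.natAbs := by exact_mod_cast habs
      exact absurd hnat (not_le.mpr (lt_of_lt_of_le Nat.lt_two_pow_self
        (Nat.pow_le_pow_left hp.two_le _)))
    have hx0 : B.repr x = 0 := Finsupp.ext coord
    exact (LinearEquiv.map_eq_zero_iff B.repr).mp hx0
  -- conclusion
  intro g x
  have hmem : MonoidAlgebra.of ℤ (Multiplicative (ZMod p)) g • x - x ∈ Nsub := by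
    rw [memN, smul_sub, ← mul_smul, auxNorm_mul_of, sub_self]
  have := hzero _ hmem
  rwa [sub_eq_zero] at this
end
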